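/- arXiv:1305.3587 — 2 statements merged into one kernel-verified Lean document; each statement's English description precedes it below -/
import Mathlib

section
/- A unit-area non-convex pentagon has perimeter strictly greater than 4, the perimeter of the unit square. -/
/-! Cutting off a reflex vertex of the pentagon leaves a quadrilateral of larger area (the removed
triangle is negatively oriented) and, by the triangle inequality, no larger perimeter. For a
quadrilateral `16 A ≤ P ^ 2`, so `16 < P ^ 2` for the pentagon. -/

open Finset

noncomputable section

abbrev Pt : Type := EuclideanSpace ℝ (Fin 2)

def cross2 (p q : Pt) : ℝ := p 0 * q 1 - p 1 * q 0

def perimeter {n : ℕ} [NeZero n] (v : Fin n → Pt) : ℝ :=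
  ∑ i, dist (v i) (v (i + 1))

def shoelace {n : ℕ} [NeZero n] (v : Fin n → Pt) : ℝ :=
  (∑ i, (v i 0 * v (i + 1) 1 - v (i + 1) 0 * v i 1)) / 2

def polyArea {n : ℕ} [NeZero n] (v : Fin n → Pt) : ℝ := |shoelace v|

def IsSimplePolygon {n : ℕ} [NeZero n] (v : Fin n → Pt) : Prop :=
  Function.Injective v ∧
  (∀ i : Fin n,
    segment ℝ (v i) (v (i + 1)) ∩ segment ℝ (v (i + 1)) (v (i + 1 + 1)) = {v (i + 1)}) ∧
  (∀ i j : Fin n, j ≠ i → j ≠ i + 1 → j + 1 ≠ i →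
    segment ℝ (v i) (v (i + 1)) ∩ segment ℝ (v j) (v (j + 1)) = ∅)

/-- A simple, positively (counterclockwise) oriented polygon. -/
def IsPolygon {n : ℕ} [NeZero n] (v : Fin n → Pt) : Prop :=
  IsSimplePolygon v ∧ 0 < shoelace v

/-- Interior angle at vertex `i` of a positively oriented simple polygon:
the unoriented angle at a convex (left-turn) vertex, and its reflex complement
at a right-turn vertex. -/
def interiorAngle {n : ℕ} [NeZero n] (v : Fin n → Pt) (i : Fin n) : ℝ :=
  if 0 ≤ cross2 (v i - v (i - 1)) (v (i + 1) - v i) then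
    EuclideanGeometry.angle (v (i - 1)) (v i) (v (i + 1))
  else 2 * Real.pi - EuclideanGeometry.angle (v (i - 1)) (v i) (v (i + 1))

def IsConvexPolygon {n : ℕ} [NeZero n] (v : Fin n → Pt) : Prop :=
  IsPolygon v ∧ ∀ i, interiorAngle v i ≤ Real.pi

/-- The polygon is circumscribed about a circle: every edge is tangent to a
common circle of radius `r` centered at `c`. -/
def IsCircumscribed {n : ℕ} [NeZero n] (v : Fin n → Pt) : Prop :=
  ∃ c : Pt, ∃ r : ℝ, 0 < r ∧
    ∀ i : Fin n, Metric.infDist c (segment ℝ (v i) (v (i + 1))) = r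

/-- The polygon is inscribed in a circle: all vertices lie on a common circle. -/
def IsInscribed {n : ℕ} [NeZero n] (v : Fin n → Pt) : Prop :=
  ∃ c : Pt, ∃ r : ℝ, ∀ i : Fin n, dist c (v i) = r

def longestEdge {n : ℕ} [NeZero n] (v : Fin n → Pt) : ℝ :=
  Finset.univ.sup' Finset.univ_nonempty (fun i => dist (v i) (v (i + 1)))

lemma cross2_le_norm_mul_norm (u w : Pt) : cross2 u w ≤ ‖u‖ * ‖w‖ := by
  have lagrange : cross2 u w ^ 2 + (u 0 * w 0 + u 1 * w 1) ^ 2 = ‖u‖ ^ 2 * ‖w‖ ^ 2 := by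
    simp only [cross2, EuclideanSpace.norm_sq_eq, Fin.sum_univ_two, Real.norm_eq_abs, sq_abs]
    ring
  have hsq : cross2 u w ^ 2 ≤ (‖u‖ * ‖w‖) ^ 2 := by
    nlinarith [sq_nonneg (u 0 * w 0 + u 1 * w 1)]
  exact (abs_le_of_sq_le_sq hsq (by positivity)).trans' (le_abs_self _)

lemma cross2_sub_le_dist_mul_dist (p q r s : Pt) :
    cross2 (q - p) (s - r) ≤ dist p q * dist r s := by
  simpa only [dist_eq_norm_sub'] using cross2_le_norm_mul_norm (q - p) (s - r)

lemma shoelace_comp_add_right {n : ℕ} [NeZero n] (v : Fin n → Pt) (k : Fin n) :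
    shoelace (fun j => v (j + k)) = shoelace v := by
  simp only [shoelace, add_right_comm _ (1 : Fin n) k]
  congr 1
  exact Equiv.sum_comp (Equiv.addRight k) (fun j => v j 0 * v (j + 1) 1 - v (j + 1) 0 * v j 1)

lemma perimeter_comp_add_right {n : ℕ} [NeZero n] (v : Fin n → Pt) (k : Fin n) :
    perimeter (fun j => v (j + k)) = perimeter v := by
  simp only [perimeter, add_right_comm _ (1 : Fin n) k]
  exact Equiv.sum_comp (Equiv.addRight k) (fun j => dist (v j) (v (j + 1)))

lemma cross2_neg_of_pi_lt_interiorAngle {n : ℕ} [NeZero n] {v : Fin n → Pt} {i : Fin n}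
    (hi : Real.pi < interiorAngle v i) : cross2 (v i - v (i - 1)) (v (i + 1) - v i) < 0 := by
  by_contra! h
  rw [interiorAngle, if_pos h] at hi
  exact hi.not_ge (EuclideanGeometry.angle_le_pi _ _ _)

/-- Each diagonal splits `2 A` into two cross products of adjacent sides, so
`4 A ≤ (a + c) (b + d) ≤ (P / 2) ^ 2`. -/
theorem sixteen_mul_shoelace_le_perimeter_sq (q : Fin 4 → Pt) :
    16 * shoelace q ≤ perimeter q ^ 2 := by
  have h₁ := cross2_sub_le_dist_mul_dist (q 0) (q 1) (q 1) (q 2)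
  have h₂ := cross2_sub_le_dist_mul_dist (q 2) (q 3) (q 3) (q 0)
  have h₃ := cross2_sub_le_dist_mul_dist (q 1) (q 2) (q 2) (q 3)
  have h₄ := cross2_sub_le_dist_mul_dist (q 3) (q 0) (q 0) (q 1)
  simp only [cross2, PiLp.sub_apply] at h₁ h₂ h₃ h₄
  simp only [shoelace, perimeter, Fin.sum_univ_four, Fin.reduceAdd]
  nlinarith [sq_nonneg (dist (q 0) (q 1) + dist (q 2) (q 3) - dist (q 1) (q 2) - dist (q 3) (q 0))]

lemma perimeter_nonneg {n : ℕ} [NeZero n] (v : Fin n → Pt) : 0 ≤ perimeter v :=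
  Finset.sum_nonneg fun _ _ => dist_nonneg

theorem sixteen_mul_shoelace_lt_perimeter_sq_of_cross2_neg (w : Fin 5 → Pt)
    (hc : cross2 (w 2 - w 1) (w 3 - w 2) < 0) : 16 * shoelace w < perimeter w ^ 2 := by
  set q : Fin 4 → Pt := ![w 0, w 1, w 3, w 4]
  have hq_area : shoelace q = shoelace w - cross2 (w 2 - w 1) (w 3 - w 2) / 2 := by
    simp only [q, shoelace, cross2, PiLp.sub_apply, Fin.sum_univ_four, Fin.sum_univ_five,
      Fin.reduceAdd, Matrix.cons_val_zero, Matrix.cons_val_one, Matrix.cons_val]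
    ring
  have hq_perimeter : perimeter q ≤ perimeter w := by
    simp only [q, perimeter, Fin.sum_univ_four, Fin.sum_univ_five, Fin.reduceAdd,
      Matrix.cons_val_zero, Matrix.cons_val_one, Matrix.cons_val]
    linarith [dist_triangle (w 1) (w 2) (w 3)]
  calc 16 * shoelace w < 16 * shoelace q := by rw [hq_area]; linarith
    _ ≤ perimeter q ^ 2 := sixteen_mul_shoelace_le_perimeter_sq q
    _ ≤ perimeter w ^ 2 := pow_le_pow_left₀ (perimeter_nonneg q) hq_perimeter 2

theorem stmt2 (v : Fin 5 → Pt) (hP : IsPolygon v) (harea : polyArea v = 1)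
    (hnonconvex : ∃ i, Real.pi < interiorAngle v i) :
    4 < perimeter v := by
  obtain ⟨i, hi⟩ := hnonconvex
  have hS : shoelace v = 1 := by rwa [polyArea, abs_of_pos hP.2] at harea
  have hreflex :
      cross2 (v (2 + (i - 2)) - v (1 + (i - 2))) (v (3 + (i - 2)) - v (2 + (i - 2))) < 0 := by
    open Fin.CommRing in
    simpa only [show (1 + (i - 2) : Fin 5) = i - 1 by ring, show (2 + (i - 2) : Fin 5) = i by ring,
      show (3 + (i - 2) : Fin 5) = i + 1 by ring] using cross2_neg_of_pi_lt_interiorAngle hi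
  have hsq := sixteen_mul_shoelace_lt_perimeter_sq_of_cross2_neg (fun j => v (j + (i - 2))) hreflex
  rw [shoelace_comp_add_right, perimeter_comp_add_right, hS] at hsq
  nlinarith [perimeter_nonneg v]

end
end

section
/- Every unit-area non-convex quadrilateral has an edge of length at least √2. -/
open Finset

noncomputable section

lemma cross_shift (C D A : Pt) : cross2 (D - C) (A - C) = cross2 (D - C) (A - D) := by
  simp [cross2]; ring

lemma cross_le_mul (P Q R : Pt) : cross2 (Q - P) (R - P) ≤ dist P Q * dist Q R := by
  rw [cross_shift]
  have h1 : dist P Q ^ 2 = (P 0 - Q 0)^2 + (P 1 - Q 1)^2 := by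
    rw [EuclideanSpace.dist_eq, Real.sq_sqrt (by positivity)]
    simp [Fin.sum_univ_two, Real.dist_eq, sq_abs]
  have h2 : dist Q R ^ 2 = (Q 0 - R 0)^2 + (Q 1 - R 1)^2 := by
    rw [EuclideanSpace.dist_eq, Real.sq_sqrt (by positivity)]
    simp [Fin.sum_univ_two, Real.dist_eq, sq_abs]
  have h3 : cross2 (Q - P) (R - Q) ^ 2 ≤ dist P Q ^2 * dist Q R ^2 := by
    rw [h1, h2]; simp only [cross2, PiLp.sub_apply]
    nlinarith [sq_nonneg ((Q 0 - P 0)*(R 0 - Q 0) + (Q 1 - P 1)*(R 1 - Q 1))]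
  nlinarith [dist_nonneg (x := P) (y := Q), dist_nonneg (x := Q) (y := R),
    mul_nonneg (dist_nonneg (x := P) (y := Q)) (dist_nonneg (x := Q) (y := R))]

lemma shoelace_split (v : Fin 4 → Pt) (i : Fin 4) :
    shoelace v = cross2 (v (i+2) - v (i+1)) (v (i+3) - v (i+1)) / 2
               + cross2 (v i - v (i+3)) (v (i+1) - v (i+3)) / 2 := by
  fin_cases i <;>
    simp [shoelace, cross2, Fin.sum_univ_four, show ((0:Fin 4)+1) = 1 from rfl,
      show ((1:Fin 4)+1) = 2 from rfl, show ((2:Fin 4)+1) = 3 from rfl,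
      show ((3:Fin 4)+1) = 0 from rfl] <;>
    ring

theorem stmt8 (v : Fin 4 → Pt) (hP : IsPolygon v) (harea : polyArea v = 1)
    (hnonconvex : ∃ i, Real.pi < interiorAngle v i) :
    ∃ i, Real.sqrt 2 ≤ dist (v i) (v (i + 1)) := by
  obtain ⟨i, hi⟩ := hnonconvex
  -- the turn at i is a right turn
  have hc : cross2 (v i - v (i - 1)) (v (i + 1) - v i) < 0 := by
    by_contra h
    push_neg at h
    rw [interiorAngle, if_pos h] at hi
    exact absurd hi (not_lt.mpr (EuclideanGeometry.angle_le_pi _ _ _))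
  have hsub : i - 1 = i + 3 := (by decide : ∀ j : Fin 4, j - 1 = j + 3) i
  rw [hsub] at hc
  have hc' : cross2 (v i - v (i + 3)) (v (i + 1) - v (i + 3)) < 0 := by
    rw [cross_shift]; exact hc
  have hsl : shoelace v = 1 := by
    rwa [polyArea, abs_of_pos hP.2] at harea
  have hT : 2 ≤ cross2 (v (i+2) - v (i+1)) (v (i+3) - v (i+1)) := by
    have := shoelace_split v i
    rw [hsl] at this
    linarith
  have hle := cross_le_mul (v (i+1)) (v (i+2)) (v (i+3))
  have hprod : 2 ≤ dist (v (i+1)) (v (i+2)) * dist (v (i+2)) (v (i+3)) := le_trans hT hle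
  have hs2 : Real.sqrt 2 * Real.sqrt 2 = 2 := Real.mul_self_sqrt (by norm_num)
  by_contra hcon
  push_neg at hcon
  have h1 := hcon (i+1)
  have h2 := hcon (i+2)
  rw [(by decide : ∀ j : Fin 4, j + 1 + 1 = j + 2) i] at h1
  rw [(by decide : ∀ j : Fin 4, j + 2 + 1 = j + 3) i] at h2
  have := mul_lt_mul'' h1 h2 dist_nonneg dist_nonneg
  rw [hs2] at this
  linarith


end
end
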